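/- Let C be an ACGW-category and A a full ACGW-subcategory closed under subobjects, quotients, and extensions. Then: (a) the classes M_A (m-morphisms with cokernel in A) and E_A (e-morphisms with kernel in A) are preserved under pullbacks and mixed pullbacks along arbitrary m- and e-morphisms; (b) in any pullback or mixed pullback square, if three of the four morphisms lie in M_A or E_A (as appropriate to their type), then so does the fourth. -/
import Mathlib


open CategoryTheory

/-- The data of a CGW-category (Campbell–Zakharevich): a double category given by
two classes of morphisms `Em` (e-morphisms, drawn `↠`) and `Mm` (m-morphisms, drawn `↣`)
on a common class of objects, a class of distinguished squares, a common initial object,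
the comparison `phi` between e- and m-morphisms (used on isomorphisms), and the
kernel/cokernel assignments `k` and `c`. -/
structure CGWData where
  Obj : Type
  Em : Obj → Obj → Type
  Mm : Obj → Obj → Type
  idE : ∀ A, Em A A
  compE : ∀ {A B C}, Em A B → Em B C → Em A C
  idM : ∀ A, Mm A A
  compM : ∀ {A B C}, Mm A B → Mm B C → Mm A C
  /-- `Dist top left bottom right` : a distinguished square with m-morphisms
  `top : TL ↣ TR`, `bottom : BL ↣ BR` and e-morphisms `left : TL ↠ BL`,
  `right : TR ↠ BR`. -/
  Dist : ∀ {A B P Q}, Mm A B → Em A P → Mm P Q → Em B Q → Prop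
  zero : Obj
  initE : ∀ A, Em zero A
  initM : ∀ A, Mm zero A
  phi : ∀ {A B}, Em A B → Mm A B
  kObj : ∀ {A B}, Em A B → Obj
  kMor : ∀ {A B} (g : Em A B), Mm (kObj g) B
  cObj : ∀ {A B}, Mm A B → Obj
  cMor : ∀ {A B} (f : Mm A B), Em (cObj f) B

namespace CGWData

variable (C : CGWData)

def IsIsoE {A B : C.Obj} (f : C.Em A B) : Prop :=
  ∃ g : C.Em B A, C.compE f g = C.idE A ∧ C.compE g f = C.idE B

def IsIsoM {A B : C.Obj} (f : C.Mm A B) : Prop :=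
  ∃ g : C.Mm B A, C.compM f g = C.idM A ∧ C.compM g f = C.idM B

/-- The axioms of a CGW-category, on top of the data of a `CGWData`:
(Z) `zero` is initial in both `Em` and `Mm`; (I) isomorphism squares are distinguished;
(M) all e- and m-morphisms are monic; (K) kernels/cokernels fit into distinguished
squares over the initial object, unique up to unique isomorphism, `c` and `k` are
mutually inverse equivalences (encoded by equifiberedness/equicofiberedness of
distinguished squares, fullness on triangles, and `c`,`k` being mutually inverse on
objects); (A) existence of "sum" squares. -/
structure IsCGW : Prop where
  idE_comp : ∀ {A B : C.Obj} (f : C.Em A B), C.compE (C.idE A) f = f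
  compE_id : ∀ {A B : C.Obj} (f : C.Em A B), C.compE f (C.idE B) = f
  assocE : ∀ {A B D E : C.Obj} (f : C.Em A B) (g : C.Em B D) (h : C.Em D E),
    C.compE (C.compE f g) h = C.compE f (C.compE g h)
  idM_comp : ∀ {A B : C.Obj} (f : C.Mm A B), C.compM (C.idM A) f = f
  compM_id : ∀ {A B : C.Obj} (f : C.Mm A B), C.compM f (C.idM B) = f
  assocM : ∀ {A B D E : C.Obj} (f : C.Mm A B) (g : C.Mm B D) (h : C.Mm D E),
    C.compM (C.compM f g) h = C.compM f (C.compM g h)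
  initE_unique : ∀ {A : C.Obj} (f : C.Em C.zero A), f = C.initE A
  initM_unique : ∀ {A : C.Obj} (f : C.Mm C.zero A), f = C.initM A
  monoE : ∀ {Z A B : C.Obj} (f : C.Em A B) (u v : C.Em Z A),
    C.compE u f = C.compE v f → u = v
  monoM : ∀ {Z A B : C.Obj} (f : C.Mm A B) (u v : C.Mm Z A),
    C.compM u f = C.compM v f → u = v
  phi_iso : ∀ {A B : C.Obj} (f : C.Em A B), C.IsIsoE f → C.IsIsoM (C.phi f)
  dist_isoSq₁ : ∀ {A B : C.Obj} (f : C.Em A B), C.IsIsoE f →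
    C.Dist (C.phi f) f (C.idM B) (C.idE B)
  dist_isoSq₂ : ∀ {A B : C.Obj} (f : C.Em A B), C.IsIsoE f →
    C.Dist (C.idM A) (C.idE A) (C.phi f) f
  dist_horiz : ∀ {A B P Q B₂ Q₂ : C.Obj} {f : C.Mm A B} {g : C.Em A P} {f' : C.Mm P Q}
    {g' : C.Em B Q} {f₂ : C.Mm B B₂} {f₂' : C.Mm Q Q₂} {g₂ : C.Em B₂ Q₂},
    C.Dist f g f' g' → C.Dist f₂ g' f₂' g₂ →
      C.Dist (C.compM f f₂) g (C.compM f' f₂') g₂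
  dist_vert : ∀ {A B P Q P₂ Q₂ : C.Obj} {f : C.Mm A B} {g : C.Em A P} {f' : C.Mm P Q}
    {g' : C.Em B Q} {g₂ : C.Em P P₂} {f₂ : C.Mm P₂ Q₂} {g₂' : C.Em Q Q₂},
    C.Dist f g f' g' → C.Dist f' g₂ f₂ g₂' →
      C.Dist f (C.compE g g₂) f₂ (C.compE g' g₂')
  kDist : ∀ {A B : C.Obj} (g : C.Em A B),
    C.Dist (C.initM A) (C.initE (C.kObj g)) (C.kMor g) g
  cDist : ∀ {A B : C.Obj} (f : C.Mm A B),
    C.Dist (C.initM (C.cObj f)) (C.initE A) f (C.cMor f)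
  k_unique : ∀ {A B K : C.Obj} (g : C.Em A B) (m : C.Mm K B),
    C.Dist (C.initM A) (C.initE K) m g →
      ∃! φ : C.Mm K (C.kObj g), C.IsIsoM φ ∧ C.compM φ (C.kMor g) = m
  c_unique : ∀ {A B K : C.Obj} (f : C.Mm A B) (e : C.Em K B),
    C.Dist (C.initM K) (C.initE A) f e →
      ∃! ψ : C.Em K (C.cObj f), C.IsIsoE ψ ∧ C.compE ψ (C.cMor f) = e
  distKer : ∀ {A B P Q : C.Obj} {f : C.Mm A B} {g : C.Em A P} {f' : C.Mm P Q}
    {g' : C.Em B Q}, C.Dist f g f' g' →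
      ∃ φ : C.Mm (C.kObj g) (C.kObj g'), C.IsIsoM φ ∧
        C.compM (C.kMor g) f' = C.compM φ (C.kMor g')
  distCoker : ∀ {A B P Q : C.Obj} {f : C.Mm A B} {g : C.Em A P} {f' : C.Mm P Q}
    {g' : C.Em B Q}, C.Dist f g f' g' →
      ∃ ψ : C.Em (C.cObj f) (C.cObj f'), C.IsIsoE ψ ∧
        C.compE (C.cMor f) g' = C.compE ψ (C.cMor f')
  c_full : ∀ {A B A₂ B₂ : C.Obj} (f : C.Mm A B) (f₂ : C.Mm A₂ B₂)
    (ι : C.Em (C.cObj f) (C.cObj f₂)) (e : C.Em B B₂), C.IsIsoE ι →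
    C.compE (C.cMor f) e = C.compE ι (C.cMor f₂) →
      ∃ eA : C.Em A A₂, C.Dist f eA f₂ e
  k_full : ∀ {A P A₂ P₂ : C.Obj} (g : C.Em A P) (g₂ : C.Em A₂ P₂)
    (ι : C.Mm (C.kObj g) (C.kObj g₂)) (m : C.Mm P P₂), C.IsIsoM ι →
    C.compM (C.kMor g) m = C.compM ι (C.kMor g₂) →
      ∃ mA : C.Mm A A₂, C.Dist mA g m g₂
  ck : ∀ {A B : C.Obj} (g : C.Em A B),
    ∃ ι : C.Em A (C.cObj (C.kMor g)), C.IsIsoE ι ∧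
      C.compE ι (C.cMor (C.kMor g)) = g
  kc : ∀ {A B : C.Obj} (f : C.Mm A B),
    ∃ ι : C.Mm A (C.kObj (C.cMor f)), C.IsIsoM ι ∧
      C.compM ι (C.kMor (C.cMor f)) = f
  axA : ∀ A B : C.Obj, ∃ (X : C.Obj) (m : C.Mm B X) (e : C.Em A X),
    C.Dist (C.initM A) (C.initE B) m e

end CGWData

namespace CGWData

/-- `p, q` exhibit `P` as the pullback of the cospan of m-morphisms `f, g`. -/
def IsPullbackM (C : CGWData) {P A B X : C.Obj} (p : C.Mm P A) (q : C.Mm P B)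
    (f : C.Mm A X) (g : C.Mm B X) : Prop :=
  C.compM p f = C.compM q g ∧
    ∀ {Z : C.Obj} (u : C.Mm Z A) (v : C.Mm Z B), C.compM u f = C.compM v g →
      ∃! w : C.Mm Z P, C.compM w p = u ∧ C.compM w q = v

/-- `p, q` exhibit `P` as the pullback of the cospan of e-morphisms `f, g`. -/
def IsPullbackE (C : CGWData) {P A B X : C.Obj} (p : C.Em P A) (q : C.Em P B)
    (f : C.Em A X) (g : C.Em B X) : Prop :=
  C.compE p f = C.compE q g ∧
    ∀ {Z : C.Obj} (u : C.Em Z A) (v : C.Em Z B), C.compE u f = C.compE v g →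
      ∃! w : C.Em Z P, C.compE w p = u ∧ C.compE w q = v

/-- `p, q` exhibit `P` as the pushout of the span of e-morphisms `f, g`. -/
def IsPushoutE (C : CGWData) {X A B P : C.Obj} (f : C.Em X A) (g : C.Em X B)
    (p : C.Em A P) (q : C.Em B P) : Prop :=
  C.compE f p = C.compE g q ∧
    ∀ {Z : C.Obj} (u : C.Em A Z) (v : C.Em B Z), C.compE f u = C.compE g v →
      ∃! w : C.Em P Z, C.compE p w = u ∧ C.compE q w = v

end CGWData
namespace CGWData

variable {D : CGWData}

theorem isoM_id (h : D.IsCGW) (A : D.Obj) : D.IsIsoM (D.idM A) :=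
  ⟨D.idM A, h.idM_comp _, h.idM_comp _⟩

theorem isoE_id (h : D.IsCGW) (A : D.Obj) : D.IsIsoE (D.idE A) :=
  ⟨D.idE A, h.idE_comp _, h.idE_comp _⟩

theorem isoM_inv {A B : D.Obj} {f : D.Mm A B} (hf : D.IsIsoM f) :
    ∃ g : D.Mm B A, D.IsIsoM g ∧ D.compM f g = D.idM A ∧ D.compM g f = D.idM B := by
  obtain ⟨g, h1, h2⟩ := hf
  exact ⟨g, ⟨f, h2, h1⟩, h1, h2⟩

theorem isoE_inv {A B : D.Obj} {f : D.Em A B} (hf : D.IsIsoE f) :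
    ∃ g : D.Em B A, D.IsIsoE g ∧ D.compE f g = D.idE A ∧ D.compE g f = D.idE B := by
  obtain ⟨g, h1, h2⟩ := hf
  exact ⟨g, ⟨f, h2, h1⟩, h1, h2⟩

theorem isoM_comp (h : D.IsCGW) {A B E : D.Obj} {f : D.Mm A B} {g : D.Mm B E}
    (hf : D.IsIsoM f) (hg : D.IsIsoM g) : D.IsIsoM (D.compM f g) := by
  obtain ⟨f', hf1, hf2⟩ := hf
  obtain ⟨g', hg1, hg2⟩ := hg
  refine ⟨D.compM g' f', ?_, ?_⟩
  · calc D.compM (D.compM f g) (D.compM g' f')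
        = D.compM f (D.compM g (D.compM g' f')) := h.assocM ..
      _ = D.compM f (D.compM (D.compM g g') f') := by rw [h.assocM]
      _ = D.compM f f' := by rw [hg1, h.idM_comp]
      _ = D.idM A := hf1
  · calc D.compM (D.compM g' f') (D.compM f g)
        = D.compM g' (D.compM f' (D.compM f g)) := h.assocM ..
      _ = D.compM g' (D.compM (D.compM f' f) g) := by rw [h.assocM]
      _ = D.compM g' g := by rw [hf2, h.idM_comp]
      _ = D.idM E := hg2

theorem isoE_comp (h : D.IsCGW) {A B E : D.Obj} {f : D.Em A B} {g : D.Em B E}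
    (hf : D.IsIsoE f) (hg : D.IsIsoE g) : D.IsIsoE (D.compE f g) := by
  obtain ⟨f', hf1, hf2⟩ := hf
  obtain ⟨g', hg1, hg2⟩ := hg
  refine ⟨D.compE g' f', ?_, ?_⟩
  · calc D.compE (D.compE f g) (D.compE g' f')
        = D.compE f (D.compE g (D.compE g' f')) := h.assocE ..
      _ = D.compE f (D.compE (D.compE g g') f') := by rw [h.assocE]
      _ = D.compE f f' := by rw [hg1, h.idE_comp]
      _ = D.idE A := hf1
  · calc D.compE (D.compE g' f') (D.compE f g)
        = D.compE g' (D.compE f' (D.compE f g)) := h.assocE ..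
      _ = D.compE g' (D.compE (D.compE f' f) g) := by rw [h.assocE]
      _ = D.compE g' g := by rw [hf2, h.idE_comp]
      _ = D.idE E := hg2

theorem cancelM (h : D.IsCGW) {A B Z : D.Obj} {i : D.Mm A B} (hi : D.IsIsoM i)
    {x y : D.Mm B Z} (hxy : D.compM i x = D.compM i y) : x = y := by
  obtain ⟨g, h1, h2⟩ := hi
  calc x = D.compM (D.compM g i) x := by rw [h2, h.idM_comp]
    _ = D.compM g (D.compM i x) := h.assocM ..
    _ = D.compM g (D.compM i y) := by rw [hxy]
    _ = D.compM (D.compM g i) y := (h.assocM ..).symm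
    _ = y := by rw [h2, h.idM_comp]

theorem cancelE (h : D.IsCGW) {A B Z : D.Obj} {i : D.Em A B} (hi : D.IsIsoE i)
    {x y : D.Em B Z} (hxy : D.compE i x = D.compE i y) : x = y := by
  obtain ⟨g, h1, h2⟩ := hi
  calc x = D.compE (D.compE g i) x := by rw [h2, h.idE_comp]
    _ = D.compE g (D.compE i x) := h.assocE ..
    _ = D.compE g (D.compE i y) := by rw [hxy]
    _ = D.compE (D.compE g i) y := (h.assocE ..).symm
    _ = y := by rw [h2, h.idE_comp]

theorem initM_zero_id (h : D.IsCGW) : D.initM D.zero = D.idM D.zero :=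
  (h.initM_unique _).symm

theorem initE_zero_id (h : D.IsCGW) : D.initE D.zero = D.idE D.zero :=
  (h.initE_unique _).symm

theorem mmZeroIso (h : D.IsCGW) {K : D.Obj} (j : D.Mm K D.zero) : D.IsIsoM j := by
  refine ⟨D.initM K, ?_, ?_⟩
  · apply h.monoM j
    calc D.compM (D.compM j (D.initM K)) j
        = D.compM j (D.compM (D.initM K) j) := h.assocM ..
      _ = D.compM j (D.initM D.zero) := by rw [h.initM_unique (D.compM (D.initM K) j)]
      _ = D.compM j (D.idM D.zero) := by rw [initM_zero_id h]
      _ = j := h.compM_id j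
      _ = D.compM (D.idM K) j := (h.idM_comp j).symm
  · rw [h.initM_unique (D.compM (D.initM K) j), initM_zero_id h]

theorem emZeroIso (h : D.IsCGW) {K : D.Obj} (j : D.Em K D.zero) : D.IsIsoE j := by
  refine ⟨D.initE K, ?_, ?_⟩
  · apply h.monoE j
    calc D.compE (D.compE j (D.initE K)) j
        = D.compE j (D.compE (D.initE K) j) := h.assocE ..
      _ = D.compE j (D.initE D.zero) := by rw [h.initE_unique (D.compE (D.initE K) j)]
      _ = D.compE j (D.idE D.zero) := by rw [initE_zero_id h]
      _ = j := h.compE_id j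
      _ = D.compE (D.idE K) j := (h.idE_comp j).symm
  · rw [h.initE_unique (D.compE (D.initE K) j), initE_zero_id h]

theorem tsSq (h : D.IsCGW) (W : D.Obj) :
    D.Dist (D.initM W) (D.initE D.zero) (D.initM W) (D.idE W) := by
  obtain ⟨eA, hD⟩ := h.c_full (D.initM W) (D.initM W) (D.idE _) (D.idE W) (isoE_id h _)
    (by rw [h.compE_id, h.idE_comp])
  rwa [h.initE_unique eA] at hD

theorem b2Sq (h : D.IsCGW) (W : D.Obj) :
    D.Dist (D.initM D.zero) (D.initE W) (D.idM W) (D.initE W) := by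
  obtain ⟨mA, hD⟩ := h.k_full (D.initE W) (D.initE W) (D.idM _) (D.idM W) (isoM_id h _)
    (by rw [h.compM_id, h.idM_comp])
  rwa [h.initM_unique mA] at hD

theorem cInit (h : D.IsCGW) (W : D.Obj) :
    ∃ ψ : D.Em W (D.cObj (D.initM W)), D.IsIsoE ψ ∧
      D.compE ψ (D.cMor (D.initM W)) = D.idE W := by
  obtain ⟨ψ, ⟨h1, h2⟩, -⟩ := h.c_unique (D.initM W) (D.idE W) (tsSq h W)
  exact ⟨ψ, h1, h2⟩

theorem kInit (h : D.IsCGW) (W : D.Obj) :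
    ∃ ι : D.Mm W (D.kObj (D.initE W)), D.IsIsoM ι ∧
      D.compM ι (D.kMor (D.initE W)) = D.idM W := by
  obtain ⟨ι, ⟨h1, h2⟩, -⟩ := h.k_unique (D.initE W) (D.idM W) (b2Sq h W)
  exact ⟨ι, h1, h2⟩

theorem kerIsoE (h : D.IsCGW) {S S' : D.Obj} {i : D.Em S S'} (hi : D.IsIsoE i) :
    ∃ χ : D.Mm D.zero (D.kObj i), D.IsIsoM χ := by
  obtain ⟨φ', hφ', -⟩ := h.distKer (h.dist_isoSq₂ i hi)
  obtain ⟨φS, ⟨hφS, -⟩, -⟩ := h.k_unique (D.idE S) (D.initM S) (tsSq h S)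
  exact ⟨D.compM φS φ', isoM_comp h hφS hφ'⟩

end CGWData
namespace CGWData

variable {D : CGWData}

theorem zeroSideSq (h : D.IsCGW) {K K' : D.Obj} {j : D.Mm K K'} (hj : D.IsIsoM j) :
    D.Dist (D.initM D.zero) (D.initE K) j (D.initE K') := by
  obtain ⟨ιK, hιK, hιK2⟩ := kInit h K
  obtain ⟨ιK', hιK', hιK2'⟩ := kInit h K'
  obtain ⟨ιKi, hιKi, hK1, hK2⟩ := isoM_inv hιK
  obtain ⟨mA, hD⟩ := h.k_full (D.initE K) (D.initE K')
      (D.compM ιKi (D.compM j ιK')) j (isoM_comp h hιKi (isoM_comp h hj hιK'))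
      (cancelM h hιK (by
        calc D.compM ιK (D.compM (D.kMor (D.initE K)) j)
            = D.compM (D.compM ιK (D.kMor (D.initE K))) j := (h.assocM ..).symm
          _ = j := by rw [hιK2, h.idM_comp]
          _ = D.compM (D.compM j ιK') (D.kMor (D.initE K')) := by
                rw [h.assocM, hιK2', h.compM_id]
          _ = D.compM (D.compM (D.compM ιK ιKi) (D.compM j ιK')) (D.kMor (D.initE K')) := by
                rw [hK1, h.idM_comp]
          _ = D.compM ιK (D.compM (D.compM ιKi (D.compM j ιK')) (D.kMor (D.initE K'))) := by
                simp only [h.assocM]))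
  rwa [h.initM_unique mA] at hD

theorem cokerIsoZero (h : D.IsCGW) {K W : D.Obj} {m : D.Mm K W} (hm : D.IsIsoM m) :
    ∃ ψ : D.Em D.zero (D.cObj m), D.IsIsoE ψ := by
  obtain ⟨ψ, ⟨h1, -⟩, -⟩ := h.c_unique m (D.initE W) (zeroSideSq h hm)
  exact ⟨ψ, h1⟩

theorem preIsoC (h : D.IsCGW) {K K' W : D.Obj} {j : D.Mm K K'} (hj : D.IsIsoM j)
    (m : D.Mm K' W) (r : D.Mm K W) (hr : D.compM j m = r) :
    ∃ ψ : D.Em (D.cObj m) (D.cObj r), D.IsIsoE ψ ∧ D.compE ψ (D.cMor r) = D.cMor m := by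
  subst hr
  have hsq := h.dist_horiz (zeroSideSq h hj) (h.cDist m)
  rw [h.initM_unique (D.compM (D.initM D.zero) (D.initM (D.cObj m)))] at hsq
  obtain ⟨ψ, ⟨h1, h2⟩, -⟩ := h.c_unique (D.compM j m) (D.cMor m) hsq
  exact ⟨ψ, h1, h2⟩

theorem tks (h : D.IsCGW) {S S' : D.Obj} {i : D.Em S S'} (hi : D.IsIsoE i) :
    D.Dist (D.initM S) (D.initE D.zero) (D.initM S') i := by
  obtain ⟨ι₀, hι₀, hι₀2⟩ := kInit h D.zero
  obtain ⟨χ, hχ⟩ := kerIsoE h hi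
  obtain ⟨ι₀i, hι₀i, h01, h02⟩ := isoM_inv hι₀
  obtain ⟨mA, hD⟩ := h.k_full (D.initE D.zero) i (D.compM ι₀i χ) (D.initM S')
      (isoM_comp h hι₀i hχ) (cancelM h hι₀ (by
        calc D.compM ι₀ (D.compM (D.kMor (D.initE D.zero)) (D.initM S'))
            = D.compM (D.compM ι₀ (D.kMor (D.initE D.zero))) (D.initM S') := (h.assocM ..).symm
          _ = D.initM S' := by rw [hι₀2, h.idM_comp]
          _ = D.compM χ (D.kMor i) := (h.initM_unique _).symm
          _ = D.compM (D.compM ι₀ ι₀i) (D.compM χ (D.kMor i)) := by rw [h01, h.idM_comp]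
          _ = D.compM ι₀ (D.compM (D.compM ι₀i χ) (D.kMor i)) := by simp only [h.assocM]))
  rwa [h.initM_unique mA] at hD

theorem preIsoKE (h : D.IsCGW) {S S' W : D.Obj} {ψ : D.Em S S'} (hψ : D.IsIsoE ψ)
    (e : D.Em S' W) (r : D.Em S W) (hr : D.compE ψ e = r) :
    ∃ φ : D.Mm (D.kObj e) (D.kObj r), D.IsIsoM φ ∧ D.compM φ (D.kMor r) = D.kMor e := by
  subst hr
  have hsq := h.dist_vert (tks h hψ) (h.kDist e)
  rw [h.initE_unique (D.compE (D.initE D.zero) (D.initE (D.kObj e)))] at hsq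
  obtain ⟨φ, ⟨h1, h2⟩, -⟩ := h.k_unique (D.compE ψ e) (D.kMor e) hsq
  exact ⟨φ, h1, h2⟩

theorem compM_sq (h : D.IsCGW) {S T W : D.Obj} (s : D.Mm S T) (t : D.Mm T W)
    (r : D.Mm S W) (hr : D.compM s t = r) :
    ∃ mA : D.Mm (D.cObj s) (D.cObj r), D.Dist mA (D.cMor s) t (D.cMor r) := by
  subst hr
  obtain ⟨ι₁, hι₁, hι₁2⟩ := h.kc s
  obtain ⟨ι₂, hι₂, hι₂2⟩ := h.kc (D.compM s t)
  obtain ⟨ι₁i, hι₁i, h11, h12⟩ := isoM_inv hι₁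
  exact h.k_full (D.cMor s) (D.cMor (D.compM s t)) (D.compM ι₁i ι₂) t
    (isoM_comp h hι₁i hι₂) (cancelM h hι₁ (by
      calc D.compM ι₁ (D.compM (D.kMor (D.cMor s)) t)
          = D.compM (D.compM ι₁ (D.kMor (D.cMor s))) t := (h.assocM ..).symm
        _ = D.compM s t := by rw [hι₁2]
        _ = D.compM ι₂ (D.kMor (D.cMor (D.compM s t))) := hι₂2.symm
        _ = D.compM (D.compM ι₁ ι₁i) (D.compM ι₂ (D.kMor (D.cMor (D.compM s t)))) := by
              rw [h11, h.idM_comp]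
        _ = D.compM ι₁ (D.compM (D.compM ι₁i ι₂) (D.kMor (D.cMor (D.compM s t)))) := by
              simp only [h.assocM]))

theorem compE_sq (h : D.IsCGW) {S T W : D.Obj} (s : D.Em S T) (t : D.Em T W)
    (r : D.Em S W) (hr : D.compE s t = r) :
    ∃ eA : D.Em (D.kObj s) (D.kObj r), D.Dist (D.kMor s) eA (D.kMor r) t := by
  subst hr
  obtain ⟨ι₁, hι₁, hι₁2⟩ := h.ck s
  obtain ⟨ι₂, hι₂, hι₂2⟩ := h.ck (D.compE s t)
  obtain ⟨ι₁i, hι₁i, h11, h12⟩ := isoE_inv hι₁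
  exact h.c_full (D.kMor s) (D.kMor (D.compE s t)) (D.compE ι₁i ι₂) t
    (isoE_comp h hι₁i hι₂) (cancelE h hι₁ (by
      calc D.compE ι₁ (D.compE (D.cMor (D.kMor s)) t)
          = D.compE (D.compE ι₁ (D.cMor (D.kMor s))) t := (h.assocE ..).symm
        _ = D.compE s t := by rw [hι₁2]
        _ = D.compE ι₂ (D.cMor (D.kMor (D.compE s t))) := hι₂2.symm
        _ = D.compE (D.compE ι₁ ι₁i) (D.compE ι₂ (D.cMor (D.kMor (D.compE s t)))) := by
              rw [h11, h.idE_comp]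
        _ = D.compE ι₁ (D.compE (D.compE ι₁i ι₂) (D.cMor (D.kMor (D.compE s t)))) := by
              simp only [h.assocE]))

theorem qmono (h : D.IsCGW) {S T W : D.Obj} (s : D.Mm S T) (t : D.Mm T W)
    (r : D.Mm S W) (hr : D.compM s t = r) :
    ∃ e₀ : D.Em (D.cObj t) (D.cObj r), D.compE e₀ (D.cMor r) = D.cMor t := by
  obtain ⟨mA, hD⟩ := compM_sq h s t r hr
  obtain ⟨ψ, hψ, hψ2⟩ := h.distCoker hD
  obtain ⟨ψi, hψi, hp1, hp2⟩ := isoE_inv hψ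
  refine ⟨D.compE ψi (D.cMor mA), ?_⟩
  calc D.compE (D.compE ψi (D.cMor mA)) (D.cMor r)
      = D.compE ψi (D.compE (D.cMor mA) (D.cMor r)) := h.assocE ..
    _ = D.compE ψi (D.compE ψ (D.cMor t)) := by rw [hψ2]
    _ = D.compE (D.compE ψi ψ) (D.cMor t) := (h.assocE ..).symm
    _ = D.cMor t := by rw [hp2, h.idE_comp]

theorem kmono (h : D.IsCGW) {S T W : D.Obj} (s : D.Em S T) (t : D.Em T W)
    (r : D.Em S W) (hr : D.compE s t = r) :
    ∃ μ : D.Mm (D.kObj t) (D.kObj r), D.compM μ (D.kMor r) = D.kMor t := by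
  obtain ⟨eA, hD⟩ := compE_sq h s t r hr
  obtain ⟨φ, hφ, hφ2⟩ := h.distKer hD
  obtain ⟨φi, hφi, hp1, hp2⟩ := isoM_inv hφ
  refine ⟨D.compM φi (D.kMor eA), ?_⟩
  calc D.compM (D.compM φi (D.kMor eA)) (D.kMor r)
      = D.compM φi (D.compM (D.kMor eA) (D.kMor r)) := h.assocM ..
    _ = D.compM φi (D.compM φ (D.kMor t)) := by rw [hφ2]
    _ = D.compM (D.compM φi φ) (D.kMor t) := (h.assocM ..).symm
    _ = D.kMor t := by rw [hp2, h.idM_comp]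

theorem zkE (h : D.IsCGW) {Y W : D.Obj} {e : D.Em Y W} (j : D.Mm (D.kObj e) D.zero) :
    D.IsIsoE e := by
  have hj := mmZeroIso h j
  obtain ⟨ji, hji, hj1, hj2⟩ := isoM_inv hj
  have hk : D.compM j (D.initM W) = D.kMor e := by
    calc D.compM j (D.initM W)
        = D.compM j (D.compM ji (D.kMor e)) := by
            rw [h.initM_unique (D.compM ji (D.kMor e))]
      _ = D.compM (D.compM j ji) (D.kMor e) := (h.assocM ..).symm
      _ = D.kMor e := by rw [hj1, h.idM_comp]
  obtain ⟨ψ₀, hψ₀, hψ₀2⟩ := preIsoC h hj (D.initM W) (D.kMor e) hk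
  obtain ⟨ψW, hψW, hψW2⟩ := cInit h W
  have hχ : D.compE (D.compE ψW ψ₀) (D.cMor (D.kMor e)) = D.idE W := by
    calc D.compE (D.compE ψW ψ₀) (D.cMor (D.kMor e))
        = D.compE ψW (D.compE ψ₀ (D.cMor (D.kMor e))) := h.assocE ..
      _ = D.compE ψW (D.cMor (D.initM W)) := by rw [hψ₀2]
      _ = D.idE W := hψW2
  have hciso : D.IsIsoE (D.cMor (D.kMor e)) := by
    refine ⟨D.compE ψW ψ₀, ?_, hχ⟩
    apply h.monoE (D.cMor (D.kMor e))
    calc D.compE (D.compE (D.cMor (D.kMor e)) (D.compE ψW ψ₀)) (D.cMor (D.kMor e))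
        = D.compE (D.cMor (D.kMor e)) (D.compE (D.compE ψW ψ₀) (D.cMor (D.kMor e))) :=
          h.assocE ..
      _ = D.cMor (D.kMor e) := by rw [hχ, h.compE_id]
      _ = D.compE (D.idE _) (D.cMor (D.kMor e)) := (h.idE_comp ..).symm
  obtain ⟨ι, hι, hι2⟩ := h.ck e
  have := isoE_comp h hι hciso
  rwa [hι2] at this

theorem zkM (h : D.IsCGW) {Y W : D.Obj} {m : D.Mm Y W} (j : D.Em (D.cObj m) D.zero) :
    D.IsIsoM m := by
  have hj := emZeroIso h j
  obtain ⟨ji, hji, hj1, hj2⟩ := isoE_inv hj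
  have hc : D.compE j (D.initE W) = D.cMor m := by
    calc D.compE j (D.initE W)
        = D.compE j (D.compE ji (D.cMor m)) := by
            rw [h.initE_unique (D.compE ji (D.cMor m))]
      _ = D.compE (D.compE j ji) (D.cMor m) := (h.assocE ..).symm
      _ = D.cMor m := by rw [hj1, h.idE_comp]
  obtain ⟨φ₀, hφ₀, hφ₀2⟩ := preIsoKE h hj (D.initE W) (D.cMor m) hc
  obtain ⟨ιW, hιW, hιW2⟩ := kInit h W
  have hχ : D.compM (D.compM ιW φ₀) (D.kMor (D.cMor m)) = D.idM W := by
    calc D.compM (D.compM ιW φ₀) (D.kMor (D.cMor m))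
        = D.compM ιW (D.compM φ₀ (D.kMor (D.cMor m))) := h.assocM ..
      _ = D.compM ιW (D.kMor (D.initE W)) := by rw [hφ₀2]
      _ = D.idM W := hιW2
  have hkiso : D.IsIsoM (D.kMor (D.cMor m)) := by
    refine ⟨D.compM ιW φ₀, ?_, hχ⟩
    apply h.monoM (D.kMor (D.cMor m))
    calc D.compM (D.compM (D.kMor (D.cMor m)) (D.compM ιW φ₀)) (D.kMor (D.cMor m))
        = D.compM (D.kMor (D.cMor m)) (D.compM (D.compM ιW φ₀) (D.kMor (D.cMor m))) :=
          h.assocM ..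
      _ = D.kMor (D.cMor m) := by rw [hχ, h.compM_id]
      _ = D.compM (D.idM _) (D.kMor (D.cMor m)) := (h.idM_comp ..).symm
  obtain ⟨ι, hι, hι2⟩ := h.kc m
  have := isoM_comp h hι hkiso
  rwa [hι2] at this

theorem swapPbM {D : CGWData} {R A B X : D.Obj} {p : D.Mm R A} {q : D.Mm R B}
    {f : D.Mm A X} {g : D.Mm B X} (hpb : IsPullbackM D p q f g) :
    IsPullbackM D q p g f := by
  obtain ⟨hc, huniv⟩ := hpb
  refine ⟨hc.symm, fun u v huv => ?_⟩
  obtain ⟨w, ⟨h1, h2⟩, hu⟩ := huniv v u huv.symm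
  exact ⟨w, ⟨h2, h1⟩, fun y hy => hu y ⟨hy.2, hy.1⟩⟩

theorem swapPbE {D : CGWData} {R A B X : D.Obj} {p : D.Em R A} {q : D.Em R B}
    {f : D.Em A X} {g : D.Em B X} (hpb : IsPullbackE D p q f g) :
    IsPullbackE D q p g f := by
  obtain ⟨hc, huniv⟩ := hpb
  refine ⟨hc.symm, fun u v huv => ?_⟩
  obtain ⟨w, ⟨h1, h2⟩, hu⟩ := huniv v u huv.symm
  exact ⟨w, ⟨h2, h1⟩, fun y hy => hu y ⟨hy.2, hy.1⟩⟩

end CGWData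

/-- The data of a pre-ACGW-category: a CGW-category together with a notion of
commutative square (an enhanced double category), chosen pullbacks in `M` and in
`E` (axiom (P)), and chosen mixed pullbacks `A ⊘_X B` (axiom (U)). -/
structure PreACGWData extends CGWData where
  /-- `Comm top left bottom right` : commutative square, same orientation as `Dist`. -/
  Comm : ∀ {A B P Q}, Mm A B → Em A P → Mm P Q → Em B Q → Prop
  pbMObj : ∀ {A B X}, Mm A X → Mm B X → Obj
  pbMfst : ∀ {A B X} (f : Mm A X) (g : Mm B X), Mm (pbMObj f g) A
  pbMsnd : ∀ {A B X} (f : Mm A X) (g : Mm B X), Mm (pbMObj f g) B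
  pbEObj : ∀ {A B X}, Em A X → Em B X → Obj
  pbEfst : ∀ {A B X} (f : Em A X) (g : Em B X), Em (pbEObj f g) A
  pbEsnd : ∀ {A B X} (f : Em A X) (g : Em B X), Em (pbEObj f g) B
  /-- The mixed pullback `A ⊘_X B` of `f : A ↣ X` and `g : B ↠ X`. -/
  mpbObj : ∀ {A B X}, Mm A X → Em B X → Obj
  mpbM : ∀ {A B X} (f : Mm A X) (g : Em B X), Mm (mpbObj f g) B
  mpbE : ∀ {A B X} (f : Mm A X) (g : Em B X), Em (mpbObj f g) A

namespace PreACGWData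

variable (C : PreACGWData)

open CGWData in
/-- The axioms of a pre-ACGW-category: the underlying CGW-axioms; every
distinguished square is commutative; commutative squares paste; (P) `M` and `E` are
closed under pullbacks; (U) the mixed pullback squares are commutative, and `c` and
`k` extend to equivalences `Ar_○ M → Ar_× E` and `Ar_○ E → Ar_× M`, i.e. every
commutative square induces pullback squares on cokernels and kernels; (S) unions
along pullbacks of m-morphisms exist and their cokernels form pushout squares in
`E` (together with the dual statement). -/
structure IsPreACGW : Prop where
  isCGW : C.toCGWData.IsCGW
  dist_comm : ∀ {A B P Q : C.Obj} {f : C.Mm A B} {g : C.Em A P} {f' : C.Mm P Q}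
    {g' : C.Em B Q}, C.Dist f g f' g' → C.Comm f g f' g'
  comm_horiz : ∀ {A B P Q B₂ Q₂ : C.Obj} {f : C.Mm A B} {g : C.Em A P} {f' : C.Mm P Q}
    {g' : C.Em B Q} {f₂ : C.Mm B B₂} {f₂' : C.Mm Q Q₂} {g₂ : C.Em B₂ Q₂},
    C.Comm f g f' g' → C.Comm f₂ g' f₂' g₂ →
      C.Comm (C.compM f f₂) g (C.compM f' f₂') g₂
  comm_vert : ∀ {A B P Q P₂ Q₂ : C.Obj} {f : C.Mm A B} {g : C.Em A P} {f' : C.Mm P Q}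
    {g' : C.Em B Q} {g₂ : C.Em P P₂} {f₂ : C.Mm P₂ Q₂} {g₂' : C.Em Q Q₂},
    C.Comm f g f' g' → C.Comm f' g₂ f₂ g₂' →
      C.Comm f (C.compE g g₂) f₂ (C.compE g' g₂')
  pbM_isPullback : ∀ {A B X : C.Obj} (f : C.Mm A X) (g : C.Mm B X),
    IsPullbackM C.toCGWData (C.pbMfst f g) (C.pbMsnd f g) f g
  pbE_isPullback : ∀ {A B X : C.Obj} (f : C.Em A X) (g : C.Em B X),
    IsPullbackE C.toCGWData (C.pbEfst f g) (C.pbEsnd f g) f g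
  mpb_comm : ∀ {A B X : C.Obj} (f : C.Mm A X) (g : C.Em B X),
    C.Comm (C.mpbM f g) (C.mpbE f g) f g
  c_comm : ∀ {A B P Q : C.Obj} {f : C.Mm A B} {g : C.Em A P} {f' : C.Mm P Q}
    {g' : C.Em B Q}, C.Comm f g f' g' →
      ∃ u : C.Em (C.cObj f) (C.cObj f'),
        C.compE (C.cMor f) g' = C.compE u (C.cMor f') ∧
        IsPullbackE C.toCGWData u (C.cMor f) (C.cMor f') g'
  k_comm : ∀ {A B P Q : C.Obj} {f : C.Mm A B} {g : C.Em A P} {f' : C.Mm P Q}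
    {g' : C.Em B Q}, C.Comm f g f' g' →
      ∃ u : C.Mm (C.kObj g) (C.kObj g'),
        C.compM (C.kMor g) f' = C.compM u (C.kMor g') ∧
        IsPullbackM C.toCGWData u (C.kMor g) (C.kMor g') f'
  axS : ∀ {P A B X : C.Obj} (p : C.Mm P A) (q : C.Mm P B) (f : C.Mm A X)
    (g : C.Mm B X), IsPullbackM C.toCGWData p q f g →
      ∃ (U : C.Obj) (a : C.Mm A U) (b : C.Mm B U) (u : C.Mm U X),
        C.compM a u = f ∧ C.compM b u = g ∧ C.compM p a = C.compM q b ∧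
        ∃ (ea : C.Em (C.cObj u) (C.cObj f)) (eb : C.Em (C.cObj u) (C.cObj g))
          (ef : C.Em (C.cObj f) (C.cObj (C.compM p f)))
          (eg : C.Em (C.cObj g) (C.cObj (C.compM p f))),
          C.compE ea (C.cMor f) = C.cMor u ∧ C.compE eb (C.cMor g) = C.cMor u ∧
          C.compE ef (C.cMor (C.compM p f)) = C.cMor f ∧
          C.compE eg (C.cMor (C.compM p f)) = C.cMor g ∧
          IsPushoutE C.toCGWData ea eb ef eg
  axS' : ∀ {P A B X : C.Obj} (p : C.Em P A) (q : C.Em P B) (f : C.Em A X)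
    (g : C.Em B X), IsPullbackE C.toCGWData p q f g →
      ∃ (U : C.Obj) (a : C.Em A U) (b : C.Em B U) (u : C.Em U X),
        C.compE a u = f ∧ C.compE b u = g ∧ C.compE p a = C.compE q b

open CGWData in
/-- The axioms of an ACGW-category: a pre-ACGW-category additionally satisfying
axiom (PP): functorial pushout-like squares `B ⋆_A C` for cospans of m-morphisms,
which are pullback squares inducing isomorphisms of cokernels, and dually for
e-morphisms (inducing isomorphisms of kernels). -/
structure IsACGW : Prop where
  toIsPreACGW : C.IsPreACGW
  ppM : ∀ {A B X : C.Obj} (f : C.Mm A B) (g : C.Mm A X),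
    ∃ (D : C.Obj) (g' : C.Mm B D) (f' : C.Mm X D),
      IsPullbackM C.toCGWData f g g' f' ∧
      ∃ ψ : C.Em (C.cObj f) (C.cObj f'), C.IsIsoE ψ
  ppE : ∀ {A B X : C.Obj} (f : C.Em A B) (g : C.Em A X),
    ∃ (D : C.Obj) (g' : C.Em B D) (f' : C.Em X D),
      IsPullbackE C.toCGWData f g g' f' ∧
      ∃ ψ : C.Mm (C.kObj f) (C.kObj f'), C.IsIsoM ψ

end PreACGWData

namespace PreACGWData
open CGWData

variable {C : PreACGWData}

theorem conv (hC : C.IsPreACGW) {Y₀ W₀ : C.Obj} (m₀ : C.Mm Y₀ W₀)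
    (jM : C.Mm (C.cObj m₀) C.zero) : Nonempty (C.Em (C.cObj m₀) C.zero) := by
  have h := hC.isCGW
  obtain ⟨u, hu, hupb⟩ := hC.c_comm (hC.mpb_comm m₀ (C.cMor m₀))
  obtain ⟨w, ⟨hw1, hw2⟩, -⟩ := hupb.2 (C.idE (C.cObj m₀)) (C.idE (C.cObj m₀)) rfl
  have hk := mmZeroIso h (C.compM (C.mpbM m₀ (C.cMor m₀)) jM)
  obtain ⟨jMi, hjMi, hq1, hq2⟩ := isoM_inv (mmZeroIso h jM)
  have heq : C.compM (C.compM (C.mpbM m₀ (C.cMor m₀)) jM) jMi = C.mpbM m₀ (C.cMor m₀) := by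
    rw [h.assocM, hq1, h.compM_id]
  have hmm := isoM_comp h hk hjMi
  rw [heq] at hmm
  obtain ⟨ψ₃, hψ₃⟩ := cokerIsoZero h hmm
  obtain ⟨ψ₃i, -, -, -⟩ := isoE_inv hψ₃
  exact ⟨C.compE w ψ₃i⟩

theorem intM (hC : C.IsPreACGW)
    {R A B X : C.Obj} {p : C.Mm R A} {q : C.Mm R B} {f : C.Mm A X} {g : C.Mm B X}
    (hpb : IsPullbackM C.toCGWData p q f g)
    {h₀ : C.Mm R X} (hh : C.compM p f = h₀)
    {m₁ : C.Mm (C.cObj p) (C.cObj h₀)} (hD₁ : C.Dist m₁ (C.cMor p) f (C.cMor h₀))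
    {m₂ : C.Mm (C.cObj q) (C.cObj h₀)} (hD₂ : C.Dist m₂ (C.cMor q) g (C.cMor h₀))
    {Z : C.Obj} (z₁ : C.Mm Z (C.cObj p)) (z₂ : C.Mm Z (C.cObj q))
    (hz : C.compM z₁ m₁ = C.compM z₂ m₂) :
    Nonempty (C.Mm Z C.zero) := by
  have h := hC.isCGW
  obtain ⟨zX, hzX1, hzX2⟩ : ∃ zX : C.Mm Z (C.cObj h₀),
      C.compM z₁ m₁ = zX ∧ C.compM z₂ m₂ = zX := ⟨_, rfl, hz.symm⟩
  obtain ⟨zh, hzh⟩ : ∃ zh : C.Em (C.cObj zX) X,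
      C.compE (C.cMor zX) (C.cMor h₀) = zh := ⟨_, rfl⟩
  obtain ⟨eAX, hDEX⟩ := compE_sq h (C.cMor zX) (C.cMor h₀) zh hzh
  obtain ⟨φX, hφX, hφX2⟩ := h.distKer hDEX
  obtain ⟨φXi, -, hx1, hx2⟩ := isoM_inv hφX
  obtain ⟨ιh, -, hιh2⟩ := h.kc h₀
  -- the morphism atilde : kObj zh → A
  obtain ⟨e₀, he₀⟩ := qmono h z₁ m₁ zX hzX1
  obtain ⟨ψ₁, hψ₁, hψ₁2⟩ := h.distCoker hD₁
  have keyA : C.compE ψ₁ (C.cMor f) = C.compE e₀ zh := by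
    calc C.compE ψ₁ (C.cMor f) = C.compE (C.cMor m₁) (C.cMor h₀) := hψ₁2.symm
      _ = C.compE (C.compE e₀ (C.cMor zX)) (C.cMor h₀) := by rw [he₀]
      _ = C.compE e₀ (C.compE (C.cMor zX) (C.cMor h₀)) := h.assocE ..
      _ = C.compE e₀ zh := by rw [hzh]
  obtain ⟨φA, hφA, hφA2⟩ := preIsoKE h hψ₁ (C.cMor f) (C.compE e₀ zh) keyA
  obtain ⟨μA, hμA⟩ := kmono h e₀ zh (C.compE e₀ zh) rfl
  obtain ⟨ιf, hιf, hιf2⟩ := h.kc f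
  obtain ⟨φAi, -, ha1, ha2⟩ := isoM_inv hφA
  obtain ⟨ιfi, -, hb1, hb2⟩ := isoM_inv hιf
  have hstep1 : C.compM ιfi f = C.kMor (C.cMor f) := by
    calc C.compM ιfi f = C.compM ιfi (C.compM ιf (C.kMor (C.cMor f))) := by rw [hιf2]
      _ = C.compM (C.compM ιfi ιf) (C.kMor (C.cMor f)) := (h.assocM ..).symm
      _ = C.kMor (C.cMor f) := by rw [hb2, h.idM_comp]
  have hstep2 : C.compM φAi (C.kMor (C.cMor f)) = C.kMor (C.compE e₀ zh) := by
    calc C.compM φAi (C.kMor (C.cMor f))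
        = C.compM φAi (C.compM φA (C.kMor (C.compE e₀ zh))) := by rw [hφA2]
      _ = C.compM (C.compM φAi φA) (C.kMor (C.compE e₀ zh)) := (h.assocM ..).symm
      _ = C.kMor (C.compE e₀ zh) := by rw [ha2, h.idM_comp]
  have haf : C.compM (C.compM (C.compM μA φAi) ιfi) f = C.kMor zh := by
    calc C.compM (C.compM (C.compM μA φAi) ιfi) f
        = C.compM (C.compM μA φAi) (C.compM ιfi f) := h.assocM ..
      _ = C.compM (C.compM μA φAi) (C.kMor (C.cMor f)) := by rw [hstep1]
      _ = C.compM μA (C.compM φAi (C.kMor (C.cMor f))) := h.assocM ..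
      _ = C.compM μA (C.kMor (C.compE e₀ zh)) := by rw [hstep2]
      _ = C.kMor zh := hμA
  -- the morphism btilde : kObj zh → B
  obtain ⟨e₀', he₀'⟩ := qmono h z₂ m₂ zX hzX2
  obtain ⟨ψ₂, hψ₂, hψ₂2⟩ := h.distCoker hD₂
  have keyB : C.compE ψ₂ (C.cMor g) = C.compE e₀' zh := by
    calc C.compE ψ₂ (C.cMor g) = C.compE (C.cMor m₂) (C.cMor h₀) := hψ₂2.symm
      _ = C.compE (C.compE e₀' (C.cMor zX)) (C.cMor h₀) := by rw [he₀']
      _ = C.compE e₀' (C.compE (C.cMor zX) (C.cMor h₀)) := h.assocE ..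
      _ = C.compE e₀' zh := by rw [hzh]
  obtain ⟨φB, hφB, hφB2⟩ := preIsoKE h hψ₂ (C.cMor g) (C.compE e₀' zh) keyB
  obtain ⟨μB, hμB⟩ := kmono h e₀' zh (C.compE e₀' zh) rfl
  obtain ⟨ιg, hιg, hιg2⟩ := h.kc g
  obtain ⟨φBi, -, hc1, hc2⟩ := isoM_inv hφB
  obtain ⟨ιgi, -, hd1, hd2⟩ := isoM_inv hιg
  have hstep1' : C.compM ιgi g = C.kMor (C.cMor g) := by
    calc C.compM ιgi g = C.compM ιgi (C.compM ιg (C.kMor (C.cMor g))) := by rw [hιg2]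
      _ = C.compM (C.compM ιgi ιg) (C.kMor (C.cMor g)) := (h.assocM ..).symm
      _ = C.kMor (C.cMor g) := by rw [hd2, h.idM_comp]
  have hstep2' : C.compM φBi (C.kMor (C.cMor g)) = C.kMor (C.compE e₀' zh) := by
    calc C.compM φBi (C.kMor (C.cMor g))
        = C.compM φBi (C.compM φB (C.kMor (C.compE e₀' zh))) := by rw [hφB2]
      _ = C.compM (C.compM φBi φB) (C.kMor (C.compE e₀' zh)) := (h.assocM ..).symm
      _ = C.kMor (C.compE e₀' zh) := by rw [hc2, h.idM_comp]
  have hbg : C.compM (C.compM (C.compM μB φBi) ιgi) g = C.kMor zh := by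
    calc C.compM (C.compM (C.compM μB φBi) ιgi) g
        = C.compM (C.compM μB φBi) (C.compM ιgi g) := h.assocM ..
      _ = C.compM (C.compM μB φBi) (C.kMor (C.cMor g)) := by rw [hstep1']
      _ = C.compM μB (C.compM φBi (C.kMor (C.cMor g))) := h.assocM ..
      _ = C.compM μB (C.kMor (C.compE e₀' zh)) := by rw [hstep2']
      _ = C.kMor zh := hμB
  -- pull back to R
  obtain ⟨w, ⟨hw1, hw2⟩, -⟩ := hpb.2 (C.compM (C.compM μA φAi) ιfi)
    (C.compM (C.compM μB φBi) ιgi) (haf.trans hbg.symm)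
  -- kMor eAX is an isomorphism
  have ht1 : C.compM (C.compM (C.compM w ιh) φXi) (C.kMor eAX) = C.idM (C.kObj zh) := by
    apply h.monoM (C.kMor zh)
    calc C.compM (C.compM (C.compM (C.compM w ιh) φXi) (C.kMor eAX)) (C.kMor zh)
        = C.compM (C.compM (C.compM w ιh) φXi) (C.compM (C.kMor eAX) (C.kMor zh)) :=
          h.assocM ..
      _ = C.compM (C.compM (C.compM w ιh) φXi) (C.compM φX (C.kMor (C.cMor h₀))) := by
          rw [hφX2]
      _ = C.compM (C.compM w ιh) (C.compM φXi (C.compM φX (C.kMor (C.cMor h₀)))) :=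
          h.assocM ..
      _ = C.compM (C.compM w ιh) (C.compM (C.compM φXi φX) (C.kMor (C.cMor h₀))) := by
          rw [← h.assocM φXi φX (C.kMor (C.cMor h₀))]
      _ = C.compM (C.compM w ιh) (C.kMor (C.cMor h₀)) := by rw [hx2, h.idM_comp]
      _ = C.compM w (C.compM ιh (C.kMor (C.cMor h₀))) := h.assocM ..
      _ = C.compM w h₀ := by rw [hιh2]
      _ = C.compM w (C.compM p f) := by rw [hh]
      _ = C.compM (C.compM w p) f := (h.assocM ..).symm
      _ = C.compM (C.compM (C.compM μA φAi) ιfi) f := by rw [hw1]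
      _ = C.kMor zh := haf
      _ = C.compM (C.idM (C.kObj zh)) (C.kMor zh) := (h.idM_comp _).symm
  have ht2 : C.compM (C.kMor eAX) (C.compM (C.compM w ιh) φXi) = C.idM (C.kObj eAX) := by
    apply h.monoM (C.kMor eAX)
    calc C.compM (C.compM (C.kMor eAX) (C.compM (C.compM w ιh) φXi)) (C.kMor eAX)
        = C.compM (C.kMor eAX) (C.compM (C.compM (C.compM w ιh) φXi) (C.kMor eAX)) :=
          h.assocM ..
      _ = C.kMor eAX := by rw [ht1, h.compM_id]
      _ = C.compM (C.idM _) (C.kMor eAX) := (h.idM_comp _).symm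
  have hk1iso : C.IsIsoM (C.kMor eAX) := ⟨C.compM (C.compM w ιh) φXi, ht2, ht1⟩
  obtain ⟨ψz, hψz⟩ := cokerIsoZero h hk1iso
  obtain ⟨ψzi, -, -, -⟩ := isoE_inv hψz
  obtain ⟨ιe, -, -⟩ := h.ck eAX
  obtain ⟨ιzX, -, -⟩ := h.kc zX
  exact ⟨C.compM ιzX (C.phi (C.compE ιe ψzi))⟩

end PreACGWData
namespace PreACGWData
open CGWData

variable {C : PreACGWData}

theorem intE (hC : C.IsPreACGW)
    {R A B X : C.Obj} {p : C.Em R A} {q : C.Em R B} {f : C.Em A X} {g : C.Em B X}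
    (hpb : IsPullbackE C.toCGWData p q f g)
    {h₀ : C.Em R X} (hh : C.compE p f = h₀)
    {e₁ : C.Em (C.kObj p) (C.kObj h₀)} (hDE₁ : C.Dist (C.kMor p) e₁ (C.kMor h₀) f)
    {e₂ : C.Em (C.kObj q) (C.kObj h₀)} (hDE₂ : C.Dist (C.kMor q) e₂ (C.kMor h₀) g)
    {Z : C.Obj} (z₁ : C.Em Z (C.kObj p)) (z₂ : C.Em Z (C.kObj q))
    (hz : C.compE z₁ e₁ = C.compE z₂ e₂) :
    Nonempty (C.Em Z C.zero) := by
  have h := hC.isCGW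
  obtain ⟨zX, hzX1, hzX2⟩ : ∃ zX : C.Em Z (C.kObj h₀),
      C.compE z₁ e₁ = zX ∧ C.compE z₂ e₂ = zX := ⟨_, rfl, hz.symm⟩
  obtain ⟨mX, hmX⟩ : ∃ mX : C.Mm (C.kObj zX) X,
      C.compM (C.kMor zX) (C.kMor h₀) = mX := ⟨_, rfl⟩
  obtain ⟨mAX, hDMX⟩ := compM_sq h (C.kMor zX) (C.kMor h₀) mX hmX
  obtain ⟨χ, hχ, hχ2⟩ := h.distCoker hDMX
  obtain ⟨χi, -, hx1, hx2⟩ := isoE_inv hχ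
  obtain ⟨ιh, -, hιh2⟩ := h.ck h₀
  -- the morphism ahat : cObj mX -> A
  obtain ⟨μA, hμA⟩ := kmono h z₁ e₁ zX hzX1
  obtain ⟨φ₁, hφ₁, hφ₁2⟩ := h.distKer hDE₁
  have keyA : C.compM φ₁ (C.kMor f) = C.compM μA mX := by
    calc C.compM φ₁ (C.kMor f) = C.compM (C.kMor e₁) (C.kMor h₀) := hφ₁2.symm
      _ = C.compM (C.compM μA (C.kMor zX)) (C.kMor h₀) := by rw [hμA]
      _ = C.compM μA (C.compM (C.kMor zX) (C.kMor h₀)) := h.assocM ..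
      _ = C.compM μA mX := by rw [hmX]
  obtain ⟨ψf, hψf, hψf2⟩ := preIsoC h hφ₁ (C.kMor f) (C.compM μA mX) keyA
  obtain ⟨eA0, heA0⟩ := qmono h μA mX (C.compM μA mX) rfl
  obtain ⟨ιA, hιA, hιA2⟩ := h.ck f
  obtain ⟨ψfi, -, ha1, ha2⟩ := isoE_inv hψf
  obtain ⟨ιAi, -, hb1, hb2⟩ := isoE_inv hιA
  have hstep1 : C.compE ιAi f = C.cMor (C.kMor f) := by
    calc C.compE ιAi f = C.compE ιAi (C.compE ιA (C.cMor (C.kMor f))) := by rw [hιA2]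
      _ = C.compE (C.compE ιAi ιA) (C.cMor (C.kMor f)) := (h.assocE ..).symm
      _ = C.cMor (C.kMor f) := by rw [hb2, h.idE_comp]
  have hstep2 : C.compE ψfi (C.cMor (C.kMor f)) = C.cMor (C.compM μA mX) := by
    calc C.compE ψfi (C.cMor (C.kMor f))
        = C.compE ψfi (C.compE ψf (C.cMor (C.compM μA mX))) := by rw [hψf2]
      _ = C.compE (C.compE ψfi ψf) (C.cMor (C.compM μA mX)) := (h.assocE ..).symm
      _ = C.cMor (C.compM μA mX) := by rw [ha2, h.idE_comp]
  have haf : C.compE (C.compE (C.compE eA0 ψfi) ιAi) f = C.cMor mX := by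
    calc C.compE (C.compE (C.compE eA0 ψfi) ιAi) f
        = C.compE (C.compE eA0 ψfi) (C.compE ιAi f) := h.assocE ..
      _ = C.compE (C.compE eA0 ψfi) (C.cMor (C.kMor f)) := by rw [hstep1]
      _ = C.compE eA0 (C.compE ψfi (C.cMor (C.kMor f))) := h.assocE ..
      _ = C.compE eA0 (C.cMor (C.compM μA mX)) := by rw [hstep2]
      _ = C.cMor mX := heA0
  -- the morphism bhat : cObj mX -> B
  obtain ⟨μB, hμB⟩ := kmono h z₂ e₂ zX hzX2
  obtain ⟨φ₂, hφ₂, hφ₂2⟩ := h.distKer hDE₂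
  have keyB : C.compM φ₂ (C.kMor g) = C.compM μB mX := by
    calc C.compM φ₂ (C.kMor g) = C.compM (C.kMor e₂) (C.kMor h₀) := hφ₂2.symm
      _ = C.compM (C.compM μB (C.kMor zX)) (C.kMor h₀) := by rw [hμB]
      _ = C.compM μB (C.compM (C.kMor zX) (C.kMor h₀)) := h.assocM ..
      _ = C.compM μB mX := by rw [hmX]
  obtain ⟨ψg, hψg, hψg2⟩ := preIsoC h hφ₂ (C.kMor g) (C.compM μB mX) keyB
  obtain ⟨eB0, heB0⟩ := qmono h μB mX (C.compM μB mX) rfl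
  obtain ⟨ιB, hιB, hιB2⟩ := h.ck g
  obtain ⟨ψgi, -, hc1, hc2⟩ := isoE_inv hψg
  obtain ⟨ιBi, -, hd1, hd2⟩ := isoE_inv hιB
  have hstep1' : C.compE ιBi g = C.cMor (C.kMor g) := by
    calc C.compE ιBi g = C.compE ιBi (C.compE ιB (C.cMor (C.kMor g))) := by rw [hιB2]
      _ = C.compE (C.compE ιBi ιB) (C.cMor (C.kMor g)) := (h.assocE ..).symm
      _ = C.cMor (C.kMor g) := by rw [hd2, h.idE_comp]
  have hstep2' : C.compE ψgi (C.cMor (C.kMor g)) = C.cMor (C.compM μB mX) := by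
    calc C.compE ψgi (C.cMor (C.kMor g))
        = C.compE ψgi (C.compE ψg (C.cMor (C.compM μB mX))) := by rw [hψg2]
      _ = C.compE (C.compE ψgi ψg) (C.cMor (C.compM μB mX)) := (h.assocE ..).symm
      _ = C.cMor (C.compM μB mX) := by rw [hc2, h.idE_comp]
  have hbg : C.compE (C.compE (C.compE eB0 ψgi) ιBi) g = C.cMor mX := by
    calc C.compE (C.compE (C.compE eB0 ψgi) ιBi) g
        = C.compE (C.compE eB0 ψgi) (C.compE ιBi g) := h.assocE ..
      _ = C.compE (C.compE eB0 ψgi) (C.cMor (C.kMor g)) := by rw [hstep1']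
      _ = C.compE eB0 (C.compE ψgi (C.cMor (C.kMor g))) := h.assocE ..
      _ = C.compE eB0 (C.cMor (C.compM μB mX)) := by rw [hstep2']
      _ = C.cMor mX := heB0
  -- pull back to R
  obtain ⟨w, ⟨hw1, hw2⟩, -⟩ := hpb.2 (C.compE (C.compE eA0 ψfi) ιAi)
    (C.compE (C.compE eB0 ψgi) ιBi) (haf.trans hbg.symm)
  -- cMor mAX is an isomorphism
  have ht1 : C.compE (C.compE (C.compE w ιh) χi) (C.cMor mAX) = C.idE (C.cObj mX) := by
    apply h.monoE (C.cMor mX)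
    calc C.compE (C.compE (C.compE (C.compE w ιh) χi) (C.cMor mAX)) (C.cMor mX)
        = C.compE (C.compE (C.compE w ιh) χi) (C.compE (C.cMor mAX) (C.cMor mX)) :=
          h.assocE ..
      _ = C.compE (C.compE (C.compE w ιh) χi) (C.compE χ (C.cMor (C.kMor h₀))) := by
          rw [hχ2]
      _ = C.compE (C.compE w ιh) (C.compE χi (C.compE χ (C.cMor (C.kMor h₀)))) :=
          h.assocE ..
      _ = C.compE (C.compE w ιh) (C.compE (C.compE χi χ) (C.cMor (C.kMor h₀))) := by
          rw [← h.assocE χi χ (C.cMor (C.kMor h₀))]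
      _ = C.compE (C.compE w ιh) (C.cMor (C.kMor h₀)) := by rw [hx2, h.idE_comp]
      _ = C.compE w (C.compE ιh (C.cMor (C.kMor h₀))) := h.assocE ..
      _ = C.compE w h₀ := by rw [hιh2]
      _ = C.compE w (C.compE p f) := by rw [hh]
      _ = C.compE (C.compE w p) f := (h.assocE ..).symm
      _ = C.compE (C.compE (C.compE eA0 ψfi) ιAi) f := by rw [hw1]
      _ = C.cMor mX := haf
      _ = C.compE (C.idE (C.cObj mX)) (C.cMor mX) := (h.idE_comp _).symm
  have ht2 : C.compE (C.cMor mAX) (C.compE (C.compE w ιh) χi) = C.idE (C.cObj mAX) := by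
    apply h.monoE (C.cMor mAX)
    calc C.compE (C.compE (C.cMor mAX) (C.compE (C.compE w ιh) χi)) (C.cMor mAX)
        = C.compE (C.cMor mAX) (C.compE (C.compE (C.compE w ιh) χi) (C.cMor mAX)) :=
          h.assocE ..
      _ = C.cMor mAX := by rw [ht1, h.compE_id]
      _ = C.compE (C.idE _) (C.cMor mAX) := (h.idE_comp _).symm
  have hc1iso : C.IsIsoE (C.cMor mAX) := ⟨C.compE (C.compE w ιh) χi, ht2, ht1⟩
  obtain ⟨κ, hκ⟩ := kerIsoE h hc1iso
  obtain ⟨κi, -, -, -⟩ := isoM_inv hκ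
  obtain ⟨ι', -, -⟩ := h.kc mAX
  obtain ⟨jE⟩ := conv hC (C.kMor zX) (C.compM ι' κi)
  obtain ⟨ιZ, -, -⟩ := h.ck zX
  exact ⟨C.compE ιZ jE⟩

end PreACGWData
namespace PreACGWData
open CGWData

variable {C : PreACGWData}

theorem lemM (hC : C.IsPreACGW) (P : C.Obj → Prop)
    (hsub : ∀ {A B : C.Obj} (f : C.Mm A B), P B → P A)
    (hquot : ∀ {A B : C.Obj} (g : C.Em A B), P B → P A)
    {R A B X : C.Obj} (p : C.Mm R A) (q : C.Mm R B) (f : C.Mm A X) (g : C.Mm B X)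
    (hpb : IsPullbackM C.toCGWData p q f g) :
    P (C.cObj g) → P (C.cObj p) := by
  intro hg
  have h := hC.isCGW
  obtain ⟨m₁, hD₁⟩ := compM_sq h p f (C.compM p f) rfl
  obtain ⟨m₂, hD₂⟩ := compM_sq h q g (C.compM p f) hpb.1.symm
  obtain ⟨ψ₂, hψ₂, -⟩ := h.distCoker hD₂
  obtain ⟨v, hv, -⟩ := hC.k_comm (hC.mpb_comm m₁ (C.cMor m₂))
  obtain ⟨ι₂, hι₂, hι₂2⟩ := h.kc m₂
  obtain ⟨ι₂i, -, hc1, hc2⟩ := isoM_inv hι₂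
  have hmid : C.compM ι₂i m₂ = C.kMor (C.cMor m₂) := by
    calc C.compM ι₂i m₂
        = C.compM ι₂i (C.compM ι₂ (C.kMor (C.cMor m₂))) := by rw [hι₂2]
      _ = C.compM (C.compM ι₂i ι₂) (C.kMor (C.cMor m₂)) := (h.assocM ..).symm
      _ = C.kMor (C.cMor m₂) := by rw [hc2, h.idM_comp]
  have hz : C.compM (C.kMor (C.mpbE m₁ (C.cMor m₂))) m₁ = C.compM (C.compM v ι₂i) m₂ := by
    calc C.compM (C.kMor (C.mpbE m₁ (C.cMor m₂))) m₁
        = C.compM v (C.kMor (C.cMor m₂)) := hv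
      _ = C.compM v (C.compM ι₂i m₂) := by rw [hmid]
      _ = C.compM (C.compM v ι₂i) m₂ := (h.assocM ..).symm
  obtain ⟨j⟩ := intM hC hpb rfl hD₁ hD₂ (C.kMor (C.mpbE m₁ (C.cMor m₂)))
    (C.compM v ι₂i) hz
  obtain ⟨eYi, -, -, -⟩ := isoE_inv (zkE h j)
  exact hquot eYi (hsub (C.mpbM m₁ (C.cMor m₂)) (hquot ψ₂ hg))

theorem lemE (hC : C.IsPreACGW) (P : C.Obj → Prop)
    (hsub : ∀ {A B : C.Obj} (f : C.Mm A B), P B → P A)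
    (hquot : ∀ {A B : C.Obj} (g : C.Em A B), P B → P A)
    {R A B X : C.Obj} (p : C.Em R A) (q : C.Em R B) (f : C.Em A X) (g : C.Em B X)
    (hpb : IsPullbackE C.toCGWData p q f g) :
    P (C.kObj g) → P (C.kObj p) := by
  intro hg
  have h := hC.isCGW
  obtain ⟨e₁, hDE₁⟩ := compE_sq h p f (C.compE p f) rfl
  obtain ⟨e₂, hDE₂⟩ := compE_sq h q g (C.compE p f) hpb.1.symm
  obtain ⟨φ₂, hφ₂, hφ₂2⟩ := h.distKer hDE₂
  obtain ⟨φ₂i, hφ₂i, hc1, hc2⟩ := isoM_inv hφ₂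
  obtain ⟨u, hu, -⟩ := hC.c_comm (hC.mpb_comm (C.compM φ₂i (C.kMor e₂)) e₁)
  obtain ⟨ψ', hψ', hψ'2⟩ := preIsoC h hφ₂i (C.kMor e₂) (C.compM φ₂i (C.kMor e₂)) rfl
  obtain ⟨ψ'i, -, hd1, hd2⟩ := isoE_inv hψ'
  obtain ⟨ι₂', hι₂', hι₂'2⟩ := h.ck e₂
  obtain ⟨ι₂'i, -, he1, he2⟩ := isoE_inv hι₂'
  have hmid1 : C.compE ι₂'i e₂ = C.cMor (C.kMor e₂) := by
    calc C.compE ι₂'i e₂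
        = C.compE ι₂'i (C.compE ι₂' (C.cMor (C.kMor e₂))) := by rw [hι₂'2]
      _ = C.compE (C.compE ι₂'i ι₂') (C.cMor (C.kMor e₂)) := (h.assocE ..).symm
      _ = C.cMor (C.kMor e₂) := by rw [he2, h.idE_comp]
  have hmid2 : C.compE ψ'i (C.cMor (C.kMor e₂)) = C.cMor (C.compM φ₂i (C.kMor e₂)) := by
    calc C.compE ψ'i (C.cMor (C.kMor e₂))
        = C.compE ψ'i (C.compE ψ' (C.cMor (C.compM φ₂i (C.kMor e₂)))) := by rw [hψ'2]
      _ = C.compE (C.compE ψ'i ψ') (C.cMor (C.compM φ₂i (C.kMor e₂))) := (h.assocE ..).symm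
      _ = C.cMor (C.compM φ₂i (C.kMor e₂)) := by rw [hd2, h.idE_comp]
  have hz : C.compE (C.cMor (C.mpbM (C.compM φ₂i (C.kMor e₂)) e₁)) e₁ =
      C.compE (C.compE u (C.compE ψ'i ι₂'i)) e₂ := by
    calc C.compE (C.cMor (C.mpbM (C.compM φ₂i (C.kMor e₂)) e₁)) e₁
        = C.compE u (C.cMor (C.compM φ₂i (C.kMor e₂))) := hu
      _ = C.compE u (C.compE ψ'i (C.cMor (C.kMor e₂))) := by rw [hmid2]
      _ = C.compE u (C.compE ψ'i (C.compE ι₂'i e₂)) := by rw [hmid1]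
      _ = C.compE u (C.compE (C.compE ψ'i ι₂'i) e₂) := by
          rw [h.assocE ψ'i ι₂'i e₂]
      _ = C.compE (C.compE u (C.compE ψ'i ι₂'i)) e₂ := (h.assocE ..).symm
  obtain ⟨j⟩ := intE hC hpb rfl hDE₁ hDE₂ (C.cMor (C.mpbM (C.compM φ₂i (C.kMor e₂)) e₁))
    (C.compE u (C.compE ψ'i ι₂'i)) hz
  obtain ⟨tYi, -, -, -⟩ := isoM_inv (zkM h j)
  exact hsub tYi (hquot (C.mpbE (C.compM φ₂i (C.kMor e₂)) e₁) hg)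

theorem extM (hC : C.IsPreACGW) (P : C.Obj → Prop) (hzero : P C.zero)
    (hquot : ∀ {A B : C.Obj} (g : C.Em A B), P B → P A)
    (hext : ∀ {A B X Q : C.Obj} {f : C.Mm A B} {g : C.Em A X} {f' : C.Mm X Q}
      {g' : C.Em B Q}, C.Dist f g f' g' → P A → P B → P X → P Q)
    {R A B X : C.Obj} (p : C.Mm R A) (q : C.Mm R B) (f : C.Mm A X) (g : C.Mm B X)
    (hcomm : C.compM p f = C.compM q g) :
    P (C.cObj p) → P (C.cObj f) → P (C.cObj g) := by
  intro hp hf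
  have h := hC.isCGW
  obtain ⟨m₁, hD₁⟩ := compM_sq h p f (C.compM p f) rfl
  obtain ⟨m₂, hD₂⟩ := compM_sq h q g (C.compM p f) hcomm.symm
  obtain ⟨ψ₁, hψ₁, -⟩ := h.distCoker hD₁
  have h2 : P (C.cObj (C.compM p f)) := hext (h.cDist m₁) hzero (hquot ψ₁ hf) hp
  obtain ⟨ψ₂, hψ₂, -⟩ := h.distCoker hD₂
  obtain ⟨ψ₂i, -, -, -⟩ := isoE_inv hψ₂
  exact hquot ψ₂i (hquot (C.cMor m₂) h2)

theorem extE (hC : C.IsPreACGW) (P : C.Obj → Prop) (hzero : P C.zero)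
    (hsub : ∀ {A B : C.Obj} (f : C.Mm A B), P B → P A)
    (hext : ∀ {A B X Q : C.Obj} {f : C.Mm A B} {g : C.Em A X} {f' : C.Mm X Q}
      {g' : C.Em B Q}, C.Dist f g f' g' → P A → P B → P X → P Q)
    {R A B X : C.Obj} (p : C.Em R A) (q : C.Em R B) (f : C.Em A X) (g : C.Em B X)
    (hcomm : C.compE p f = C.compE q g) :
    P (C.kObj p) → P (C.kObj f) → P (C.kObj g) := by
  intro hp hf
  have h := hC.isCGW
  obtain ⟨e₁, hDE₁⟩ := compE_sq h p f (C.compE p f) rfl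
  obtain ⟨e₂, hDE₂⟩ := compE_sq h q g (C.compE p f) hcomm.symm
  obtain ⟨φ₁, hφ₁, -⟩ := h.distKer hDE₁
  have h2 : P (C.kObj (C.compE p f)) := hext (h.kDist e₁) hzero hp (hsub φ₁ hf)
  obtain ⟨φ₂, hφ₂, -⟩ := h.distKer hDE₂
  obtain ⟨φ₂i, -, -, -⟩ := isoM_inv hφ₂
  exact hsub φ₂i (hsub (C.kMor e₂) h2)

end PreACGWData
open CGWData in
/-- Lemma 7.4 of Campbell–Zakharevich: let `C` be an ACGW-category and `A` a full
ACGW-subcategory (given by the predicate `P` on objects) closed under subobjects,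
quotients, and extensions.  Then:
(a) the classes `M_A` (m-morphisms with cokernel in `A`) and `E_A` (e-morphisms with
kernel in `A`) are preserved under pullbacks in `M` and `E` and under mixed
pullbacks (i.e. along arbitrary commutative squares) along arbitrary m- and
e-morphisms;
(b) in any pullback or mixed pullback (commutative) square, if three of the four
morphisms lie in `M_A` or `E_A` (as appropriate to their type), then so does the
fourth. -/
theorem MA_EA_pullback_closure (C : PreACGWData) (hC : C.IsACGW) (P : C.Obj → Prop)
    (hzero : P C.zero)
    (hsub : ∀ {A B : C.Obj} (f : C.Mm A B), P B → P A)
    (hquot : ∀ {A B : C.Obj} (g : C.Em A B), P B → P A)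
    (hext : ∀ {A B X Q : C.Obj} {f : C.Mm A B} {g : C.Em A X} {f' : C.Mm X Q}
      {g' : C.Em B Q}, C.Dist f g f' g' → P A → P B → P X → P Q) :
    -- (a) closure under mixed pullbacks (commutative squares)
    ((∀ {A B X Q : C.Obj} {f : C.Mm A B} {g : C.Em A X} {f' : C.Mm X Q}
      {g' : C.Em B Q}, C.Comm f g f' g' →
        (P (C.cObj f') → P (C.cObj f)) ∧ (P (C.kObj g') → P (C.kObj g))) ∧
    -- (a) closure under pullbacks in `M`
    (∀ {R A B X : C.Obj} (p : C.Mm R A) (q : C.Mm R B) (f : C.Mm A X)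
      (g : C.Mm B X), IsPullbackM C.toCGWData p q f g →
        (P (C.cObj g) → P (C.cObj p)) ∧ (P (C.cObj f) → P (C.cObj q))) ∧
    -- (a) closure under pullbacks in `E`
    (∀ {R A B X : C.Obj} (p : C.Em R A) (q : C.Em R B) (f : C.Em A X)
      (g : C.Em B X), IsPullbackE C.toCGWData p q f g →
        (P (C.kObj g) → P (C.kObj p)) ∧ (P (C.kObj f) → P (C.kObj q)))) ∧
    -- (b) 3-of-4 for mixed pullback (commutative) squares
    (∀ {A B X Q : C.Obj} {f : C.Mm A B} {g : C.Em A X} {f' : C.Mm X Q}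
      {g' : C.Em B Q}, C.Comm f g f' g' →
        (P (C.cObj f) → P (C.kObj g) → P (C.kObj g') → P (C.cObj f')) ∧
        (P (C.cObj f) → P (C.cObj f') → P (C.kObj g') → P (C.kObj g)) ∧
        (P (C.cObj f') → P (C.kObj g) → P (C.kObj g') → P (C.cObj f)) ∧
        (P (C.cObj f) → P (C.cObj f') → P (C.kObj g) → P (C.kObj g'))) ∧
    -- (b) 3-of-4 for pullback squares in `M`
    (∀ {R A B X : C.Obj} (p : C.Mm R A) (q : C.Mm R B) (f : C.Mm A X)
      (g : C.Mm B X), IsPullbackM C.toCGWData p q f g →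
        (P (C.cObj p) → P (C.cObj q) → P (C.cObj f) → P (C.cObj g)) ∧
        (P (C.cObj p) → P (C.cObj q) → P (C.cObj g) → P (C.cObj f)) ∧
        (P (C.cObj p) → P (C.cObj f) → P (C.cObj g) → P (C.cObj q)) ∧
        (P (C.cObj q) → P (C.cObj f) → P (C.cObj g) → P (C.cObj p))) ∧
    -- (b) 3-of-4 for pullback squares in `E`
    (∀ {R A B X : C.Obj} (p : C.Em R A) (q : C.Em R B) (f : C.Em A X)
      (g : C.Em B X), IsPullbackE C.toCGWData p q f g →
        (P (C.kObj p) → P (C.kObj q) → P (C.kObj f) → P (C.kObj g)) ∧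
        (P (C.kObj p) → P (C.kObj q) → P (C.kObj g) → P (C.kObj f)) ∧
        (P (C.kObj p) → P (C.kObj f) → P (C.kObj g) → P (C.kObj q)) ∧
        (P (C.kObj q) → P (C.kObj f) → P (C.kObj g) → P (C.kObj p))) := by
  have hP := hC.toIsPreACGW
  have h := hP.isCGW
  refine ⟨⟨?_, ?_, ?_⟩, ?_, ?_, ?_⟩
  · -- (a) mixed
    intro A B X Q f g f' g' hsq
    obtain ⟨u, -, -⟩ := hP.c_comm hsq
    obtain ⟨v, -, -⟩ := hP.k_comm hsq
    exact ⟨hquot u, hsub v⟩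
  · -- (a) pullbacks in M
    intro R A B X p q f g hpb
    exact ⟨PreACGWData.lemM hP P hsub hquot p q f g hpb,
      PreACGWData.lemM hP P hsub hquot q p g f (swapPbM hpb)⟩
  · -- (a) pullbacks in E
    intro R A B X p q f g hpb
    exact ⟨PreACGWData.lemE hP P hsub hquot p q f g hpb,
      PreACGWData.lemE hP P hsub hquot q p g f (swapPbE hpb)⟩
  · -- (b) mixed
    intro A B X Q f g f' g' hsq
    obtain ⟨u, -, hupb⟩ := hP.c_comm hsq
    obtain ⟨v, -, hvpb⟩ := hP.k_comm hsq
    refine ⟨?_, ?_, ?_, ?_⟩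
    · intro hf _ hg'
      exact hext (h.kDist u) hzero hf
        (PreACGWData.lemE hP P hsub hquot u (C.cMor f) (C.cMor f') g' hupb hg')
    · intro _ _ hg'
      exact hsub v hg'
    · intro hf' _ _
      exact hquot u hf'
    · intro hf hf' hg
      exact hext (h.cDist v) hzero
        (PreACGWData.lemM hP P hsub hquot v (C.kMor g) (C.kMor g') f' hvpb hf') hg
  · -- (b) pullbacks in M
    intro R A B X p q f g hpb
    refine ⟨?_, ?_, ?_, ?_⟩
    · intro hp _ hf
      exact PreACGWData.extM hP P hzero hquot hext p q f g hpb.1 hp hf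
    · intro _ hq hg
      exact PreACGWData.extM hP P hzero hquot hext q p g f hpb.1.symm hq hg
    · intro _ hf _
      exact PreACGWData.lemM hP P hsub hquot q p g f (swapPbM hpb) hf
    · intro _ _ hg
      exact PreACGWData.lemM hP P hsub hquot p q f g hpb hg
  · -- (b) pullbacks in E
    intro R A B X p q f g hpb
    refine ⟨?_, ?_, ?_, ?_⟩
    · intro hp _ hf
      exact PreACGWData.extE hP P hzero hsub hext p q f g hpb.1 hp hf
    · intro _ hq hg
      exact PreACGWData.extE hP P hzero hsub hext q p g f hpb.1.symm hq hg
    · intro _ hf _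
      exact PreACGWData.lemE hP P hsub hquot q p g f (swapPbE hpb) hf
    · intro _ _ hg
      exact PreACGWData.lemE hP P hsub hquot p q f g hpb hg
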